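/- arXiv:1610.03766 — 2 statements merged into one kernel-verified Lean document; each statement's English description precedes it below -/
import Mathlib

section
/- Every bistable graph with at least two vertices is biconnected, i.e., it has no cutvertex. -/
/-- `S` is an independent set in `G`. -/
def IsIndepSet {V : Type*} (G : SimpleGraph V) (S : Finset V) : Prop :=
  ∀ u ∈ S, ∀ v ∈ S, ¬ G.Adj u v

/-- `G` is bistable: connected, bipartite with partite sets `A` and `B`, both of which are
independent and of equal size, and every independent set of maximum size equals `A` or `B`. -/
def IsBistable {V : Type*} [Fintype V] [DecidableEq V] (G : SimpleGraph V) : Prop :=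
  G.Connected ∧ ∃ A B : Finset V,
    A ∪ B = Finset.univ ∧ Disjoint A B ∧ A ≠ B ∧ A.card = B.card ∧
    IsIndepSet G A ∧ IsIndepSet G B ∧
    (∀ S : Finset V, IsIndepSet G S → A.card ≤ S.card → S = A ∨ S = B)

/-!
Suppose `G - v` is disconnected, with `v` in the part `A`, and split `V ∖ {v}` into two nonempty
sides `C`, `D` with no edges between them. Exchanging the parts on one side gives the independent
sets `(B ∩ C) ∪ (A ∩ D)` and `(A ∩ C) ∪ (B ∩ D)`, whose sizes add up to
`|A| + |B| - 1 = 2|A| - 1`, so one of them is maximum and hence equals `A` or `B`. Either way `B`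
misses `C` or `D`. But `G` is connected, so both sides contain a neighbour of `v`, and all
neighbours of `v` lie in `B`.
-/

section

open Finset

variable {V : Type*} {G : SimpleGraph V}

theorem IsIndepSet.mono {S T : Finset V} (hT : IsIndepSet G T) (hST : S ⊆ T) :
    IsIndepSet G S :=
  fun a ha b hb => hT a (hST ha) b (hST hb)

theorem IsIndepSet.union [DecidableEq V] {S T : Finset V} (hS : IsIndepSet G S)
    (hT : IsIndepSet G T) (hST : ∀ a ∈ S, ∀ b ∈ T, ¬ G.Adj a b) :
    IsIndepSet G (S ∪ T) := by
  intro a ha b hb hab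
  rcases mem_union.mp ha with ha | ha <;> rcases mem_union.mp hb with hb | hb
  · exact hS a ha b hb hab
  · exact hST a ha b hb hab
  · exact hST b hb a ha hab.symm
  · exact hT a ha b hb hab

variable [Fintype V] [DecidableEq V]

structure IsSplitAt (G : SimpleGraph V) (v : V) (C D : Finset V) : Prop where
  disjoint : Disjoint C D
  union_eq : C ∪ D = univ.erase v
  not_adj : ∀ c ∈ C, ∀ d ∈ D, ¬ G.Adj c d

variable {v : V} {A B C D : Finset V}

theorem IsSplitAt.symm (hs : IsSplitAt G v C D) : IsSplitAt G v D C where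
  disjoint := hs.disjoint.symm
  union_eq := by rw [union_comm, hs.union_eq]
  not_adj c hc d hd hcd := hs.not_adj d hd c hc hcd.symm

theorem IsSplitAt.notMem_left (hs : IsSplitAt G v C D) : v ∉ C := fun hv => by
  simpa [hs.union_eq] using mem_union_left D hv

theorem IsSplitAt.card_inter_add_card_inter (hs : IsSplitAt G v C D) (X : Finset V) :
    #(X ∩ C) + #(X ∩ D) = #(X.erase v) := by
  rw [← card_union_of_disjoint (hs.disjoint.mono inter_subset_right inter_subset_right),
    ← inter_union_distrib_left, hs.union_eq, inter_erase, inter_univ]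

theorem exists_isSplitAt_of_not_preconnected
    (h : ¬ (G.induce {w : V | w ≠ v}).Preconnected) :
    ∃ C D : Finset V, C.Nonempty ∧ D.Nonempty ∧ IsSplitAt G v C D := by
  classical
  obtain ⟨x, y, hxy⟩ : ∃ x y, ¬ (G.induce {w : V | w ≠ v}).Reachable x y := by
    simpa [SimpleGraph.Preconnected] using h
  set C : Finset V := {w | ∃ hw : w ≠ v, (G.induce {w : V | w ≠ v}).Reachable x ⟨w, hw⟩}
  have hC : C ⊆ univ.erase v := fun w hw => by
    obtain ⟨hwv, -⟩ := (mem_filter.mp hw).2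
    exact mem_erase.mpr ⟨hwv, mem_univ w⟩
  have hyC : (y : V) ∉ C := fun hy => by
    obtain ⟨_, hr⟩ := (mem_filter.mp hy).2
    exact hxy hr
  refine ⟨C, univ.erase v \ C, ⟨x, mem_filter.mpr ⟨mem_univ _, x.2, .rfl⟩⟩,
    ⟨y, mem_sdiff.mpr ⟨mem_erase.mpr ⟨y.2, mem_univ _⟩, hyC⟩⟩,
    disjoint_sdiff, union_sdiff_of_subset hC, fun c hc d hd hcd => ?_⟩
  obtain ⟨hcv, hxc⟩ := (mem_filter.mp hc).2
  obtain ⟨hdv, hdC⟩ : d ≠ v ∧ d ∉ C := by simpa using hd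
  have hcd' : (G.induce {w : V | w ≠ v}).Adj ⟨c, hcv⟩ ⟨d, hdv⟩ := hcd
  exact hdC (mem_filter.mpr ⟨mem_univ d, hdv, hxc.trans hcd'.reachable⟩)

theorem SimpleGraph.Connected.exists_adj_of_isSplitAt (hG : G.Connected)
    (hs : IsSplitAt G v C D) (hC : C.Nonempty) : ∃ b ∈ C, G.Adj v b := by
  obtain ⟨c, hc⟩ := hC
  obtain ⟨p⟩ := hG.preconnected c v
  obtain ⟨d, -, hd₁, hd₂⟩ :=
    p.exists_boundary_dart (C : Set V) hc (by simpa using hs.notMem_left)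
  have hsnd : d.snd = v := by
    by_contra hne
    have : d.snd ∈ C ∪ D := hs.union_eq ▸ mem_erase.mpr ⟨hne, mem_univ _⟩
    exact hs.not_adj _ hd₁ _ ((mem_union.mp this).resolve_left hd₂) d.adj
  exact ⟨d.fst, hd₁, hsnd ▸ d.adj.symm⟩

theorem IsSplitAt.isIndepSet_exchange (hs : IsSplitAt G v C D) (hA : IsIndepSet G A)
    (hB : IsIndepSet G B) : IsIndepSet G (B ∩ C ∪ A ∩ D) :=
  (hB.mono inter_subset_left).union (hA.mono inter_subset_left) fun a ha b hb =>
    hs.not_adj a (mem_inter.mp ha).2 b (mem_inter.mp hb).2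

theorem IsSplitAt.disjoint_of_exchange_eq (hs : IsSplitAt G v C D) (hdisj : Disjoint A B)
    (h : B ∩ C ∪ A ∩ D = A ∨ B ∩ C ∪ A ∩ D = B) : Disjoint B C ∨ Disjoint B D := by
  rcases h with h | h
  · refine .inl (disjoint_left.mpr fun b hbB hbC => ?_)
    have hbA : b ∈ A := h ▸ mem_union_left _ (mem_inter.mpr ⟨hbB, hbC⟩)
    exact disjoint_left.mp hdisj hbA hbB
  · refine .inr (disjoint_left.mpr fun b hbB hbD => ?_)
    rcases mem_union.mp (h.symm ▸ hbB : b ∈ B ∩ C ∪ A ∩ D) with hb | hb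
    · exact disjoint_left.mp hs.disjoint (mem_inter.mp hb).2 hbD
    · exact disjoint_left.mp hdisj (mem_inter.mp hb).1 hbB

theorem IsSplitAt.disjoint_or_disjoint (hs : IsSplitAt G v C D) (hdisj : Disjoint A B)
    (hcard : #A = #B) (hA : IsIndepSet G A) (hB : IsIndepSet G B)
    (hmax : ∀ S : Finset V, IsIndepSet G S → #A ≤ #S → S = A ∨ S = B) (hv : v ∈ A) :
    Disjoint B C ∨ Disjoint B D := by
  have hsum : #(B ∩ C ∪ A ∩ D) + #(B ∩ D ∪ A ∩ C) + 1 = 2 * #A := by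
    rw [card_union_of_disjoint (hs.disjoint.mono inter_subset_right inter_subset_right),
      card_union_of_disjoint (hs.disjoint.symm.mono inter_subset_right inter_subset_right)]
    have hA' := hs.card_inter_add_card_inter A
    have hB' := hs.card_inter_add_card_inter B
    rw [card_erase_of_mem hv] at hA'
    rw [erase_eq_of_notMem (disjoint_left.mp hdisj hv)] at hB'
    have := card_pos.mpr ⟨v, hv⟩
    omega
  rcases (by omega : #A ≤ #(B ∩ C ∪ A ∩ D) ∨ #A ≤ #(B ∩ D ∪ A ∩ C)) with hle | hle
  · exact hs.disjoint_of_exchange_eq hdisj (hmax _ (hs.isIndepSet_exchange hA hB) hle)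
  · exact (hs.symm.disjoint_of_exchange_eq hdisj
      (hmax _ (hs.symm.isIndepSet_exchange hA hB) hle)).symm

end

theorem bistable_biconnected_general {V : Type*} [Fintype V] [DecidableEq V]
    (G : SimpleGraph V) (h : IsBistable G) :
    ∀ v : V, ((G.induce {w : V | w ≠ v})).Connected := by
  obtain ⟨hconn, A, B, hcover, hdisj, -, hcard, hA, hB, hmax⟩ := h
  intro v
  wlog hvA : v ∈ A generalizing A B
  · have hvB : v ∈ B := by simpa [hvA] using Finset.eq_univ_iff_forall.mp hcover v
    exact this B A (by rw [Finset.union_comm, hcover]) hdisj.symm hcard.symm hB hA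
      (fun S hS hle => (hmax S hS (hcard ▸ hle)).symm) hvB
  have hnbr : ∀ b, G.Adj v b → b ∈ B := fun b hvb =>
    (Finset.mem_union.mp (Finset.eq_univ_iff_forall.mp hcover b)).resolve_left
      fun hbA => hA v hvA b hbA hvb
  obtain ⟨b, hbB⟩ := Finset.card_pos.mp (hcard ▸ Finset.card_pos.mpr ⟨v, hvA⟩)
  have : Nonempty {w : V | w ≠ v} :=
    ⟨⟨b, fun hbv => Finset.disjoint_left.mp hdisj (hbv ▸ hvA) hbB⟩⟩
  refine ⟨fun x y => by_contra fun hxy => ?_⟩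
  obtain ⟨C, D, hC, hD, hs⟩ := exists_isSplitAt_of_not_preconnected fun hpre => hxy (hpre x y)
  obtain ⟨c, hcC, hvc⟩ := hconn.exists_adj_of_isSplitAt hs hC
  obtain ⟨d, hdD, hvd⟩ := hconn.exists_adj_of_isSplitAt hs.symm hD
  rcases hs.disjoint_or_disjoint hdisj hcard hA hB hmax hvA with hBC | hBD
  · exact Finset.disjoint_left.mp hBC (hnbr c hvc) hcC
  · exact Finset.disjoint_left.mp hBD (hnbr d hvd) hdD

/-- every bistable graph with at least two vertices is biconnected:
deleting any single vertex leaves the graph connected. -/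
theorem bistable_biconnected {V : Type*} [Fintype V] [DecidableEq V]
    (G : SimpleGraph V) (h : IsBistable G) (hcard : 2 ≤ Fintype.card V) :
    ∀ v : V, ((G.induce {w : V | w ≠ v})).Connected :=
  bistable_biconnected_general G h
end

section
/- Let G = (I ∪ J, E) be a balanced bipartite graph without isolated vertices, and let S ⊆ I be a nonempty set that is inclusion-wise minimal with the property |S| ≥ |N(S)|. Then the induced subgraph G[N[S]] is bistable: it is connected, bipartite with partite sets S and N(S), and its only two maximum independent sets are S and N(S). -/
/-- The open neighborhood of a vertex set `S` in `G`. -/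
def nbhd {V : Type*} [Fintype V] [DecidableEq V] (G : SimpleGraph V) [DecidableRel G.Adj]
    (S : Finset V) : Finset V :=
  (S.biUnion fun v => G.neighborFinset v) \ S

lemma mem_nbhd_iff {V : Type*} [Fintype V] [DecidableEq V] (G : SimpleGraph V)
    [DecidableRel G.Adj] {S : Finset V} {w : V} :
    w ∈ nbhd G S ↔ (∃ v ∈ S, G.Adj v w) ∧ w ∉ S := by
  simp [nbhd, SimpleGraph.mem_neighborFinset]

/-- in a balanced bipartite graph without isolated vertices, if `S ⊆ I` is
nonempty and inclusion-wise minimal with `|N(S)| ≤ |S|`, then `G[N[S]]` is bistable: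
it is connected, its partite sets `S` and `N(S)` have equal size and are independent,
and every independent set of `G` inside `N[S]` of size at least `|S|` equals `S` or `N(S)`. -/
theorem minimal_set_closed_nbhd_bistable {V : Type*} [Fintype V] [DecidableEq V]
    (G : SimpleGraph V) [DecidableRel G.Adj] (I J : Finset V)
    (hpart : I ∪ J = Finset.univ) (hdisj : Disjoint I J)
    (hIind : IsIndepSet G I) (hJind : IsIndepSet G J) (hbal : I.card = J.card)
    (hnoiso : ∀ v : V, ∃ w, G.Adj v w)
    (S : Finset V) (hSI : S ⊆ I) (hSne : S.Nonempty)
    (hS : (nbhd G S).card ≤ S.card)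
    (hmin : ∀ S' ⊆ S, S'.Nonempty → S' ≠ S → ¬ ((nbhd G S').card ≤ S'.card)) :
    (G.induce (↑(S ∪ nbhd G S) : Set V)).Connected ∧
    (nbhd G S).card = S.card ∧
    IsIndepSet G S ∧ IsIndepSet G (nbhd G S) ∧
    (∀ T : Finset V, T ⊆ S ∪ nbhd G S → IsIndepSet G T → S.card ≤ T.card →
      T = S ∨ T = nbhd G S) := by
  classical
  -- monotonicity of nbhd on subsets of S
  have hmono : ∀ S' ⊆ S, nbhd G S' ⊆ nbhd G S := by
    intro S' hS' w hw
    rw [mem_nbhd_iff] at hw ⊢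
    obtain ⟨⟨v, hv, hadj⟩, -⟩ := hw
    exact ⟨⟨v, hS' hv, hadj⟩, fun hwS => hIind v (hSI (hS' hv)) w (hSI hwS) hadj⟩
  -- N(S) ⊆ J
  have hNJ : nbhd G S ⊆ J := by
    intro w hw
    obtain ⟨⟨v, hv, hadj⟩, -⟩ := (mem_nbhd_iff G).1 hw
    have hw' : w ∈ I ∪ J := hpart ▸ Finset.mem_univ w
    rcases Finset.mem_union.1 hw' with h | h
    · exact absurd hadj (hIind v (hSI hv) w h)
    · exact h
  -- cardinality
  have hcard : (nbhd G S).card = S.card := by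
    refine le_antisymm hS ?_
    obtain ⟨v, hv⟩ := hSne
    by_cases h1 : S \ {v} = ∅
    · have hSv : S = {v} := by
        apply Finset.eq_singleton_iff_unique_mem.2
        refine ⟨hv, fun x hx => ?_⟩
        by_contra hxv
        exact (Finset.eq_empty_iff_forall_notMem.1 h1 x)
          (Finset.mem_sdiff.2 ⟨hx, by simpa using hxv⟩)
      obtain ⟨w, hw⟩ := hnoiso v
      have hwN : w ∈ nbhd G S := by
        refine (mem_nbhd_iff G).2 ⟨⟨v, hv, hw⟩, fun hwS => ?_⟩
        rw [hSv, Finset.mem_singleton] at hwS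
        exact G.loopless.irrefl v (hwS ▸ hw)
      have h0 : 0 < (nbhd G S).card := Finset.card_pos.2 ⟨w, hwN⟩
      have h1 : S.card = 1 := by rw [hSv]; exact Finset.card_singleton v
      omega
    · have hne : (S \ {v}).Nonempty := Finset.nonempty_iff_ne_empty.2 h1
      have hsub : S \ {v} ⊆ S := Finset.sdiff_subset
      have hneq : S \ {v} ≠ S := by
        intro h
        have : v ∈ S \ {v} := h.symm ▸ hv
        simp at this
      have hlt := not_le.1 (hmin _ hsub hne hneq)
      have hc1 : (S \ {v}).card = S.card - 1 := by
        rw [Finset.card_sdiff_of_subset (Finset.singleton_subset_iff.2 hv), Finset.card_singleton]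
      have hc2 : (nbhd G (S \ {v})).card ≤ (nbhd G S).card :=
        Finset.card_le_card (hmono _ hsub)
      have hvpos : 0 < S.card := Finset.card_pos.2 ⟨v, hv⟩
      omega
  -- independence of S
  have hSind : IsIndepSet G S := fun u hu v hv => hIind u (hSI hu) v (hSI hv)
  -- independence of N(S)
  have hNind : IsIndepSet G (nbhd G S) := fun u hu v hv => hJind u (hNJ hu) v (hNJ hv)
  -- connectivity
  obtain ⟨s₀, hs₀⟩ := hSne
  have hs₀U : s₀ ∈ (↑(S ∪ nbhd G S) : Set V) := by
    simp only [Finset.coe_union, Set.mem_union, Finset.mem_coe]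
    exact Or.inl hs₀
  set U : Set V := (↑(S ∪ nbhd G S) : Set V) with hU
  have hmemU : ∀ x, x ∈ S ∪ nbhd G S → x ∈ U := by
    intro x hx
    simp only [hU, Finset.coe_union, Set.mem_union, Finset.mem_coe]
    exact Finset.mem_union.1 hx
  set reach : V → Prop :=
    fun v => ∃ h : v ∈ U, (G.induce U).Reachable ⟨s₀, hs₀U⟩ ⟨v, h⟩ with hreach
  have hstep : ∀ v w, reach v → G.Adj v w → w ∈ U → reach w := by
    rintro v w ⟨hvU, hr⟩ hadj hwU
    refine ⟨hwU, hr.trans (SimpleGraph.Adj.reachable ?_)⟩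
    exact hadj
  have hreach₀ : reach s₀ := ⟨hs₀U, SimpleGraph.Reachable.refl _⟩
  set S1 : Finset V := S.filter reach with hS1
  have hall : ∀ v ∈ S, reach v := by
    by_contra hcon
    push_neg at hcon
    obtain ⟨v₀, hv₀S, hv₀⟩ := hcon
    have hS1sub : S1 ⊆ S := Finset.filter_subset _ _
    have hS1ne : S1.Nonempty := ⟨s₀, Finset.mem_filter.2 ⟨hs₀, hreach₀⟩⟩
    have hS1neq : S1 ≠ S := by
      intro h
      exact hv₀ (Finset.mem_filter.1 (h ▸ hv₀S)).2
    set S2 : Finset V := S \ S1 with hS2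
    have hS2sub : S2 ⊆ S := Finset.sdiff_subset
    have hS2ne : S2.Nonempty := by
      rw [hS2]
      rw [Finset.sdiff_nonempty]
      intro h
      exact hS1neq (Finset.Subset.antisymm hS1sub h)
    have hS2neq : S2 ≠ S := by
      intro h
      have : s₀ ∈ S2 := h.symm ▸ hs₀
      rw [hS2, Finset.mem_sdiff] at this
      exact this.2 (Finset.mem_filter.2 ⟨hs₀, hreach₀⟩)
    have h1 := not_le.1 (hmin S1 hS1sub hS1ne hS1neq)
    have h2 := not_le.1 (hmin S2 hS2sub hS2ne hS2neq)
    have hdisjN : Disjoint (nbhd G S1) (nbhd G S2) := by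
      rw [Finset.disjoint_left]
      intro w hw1 hw2
      obtain ⟨⟨v1, hv1, ha1⟩, -⟩ := (mem_nbhd_iff G).1 hw1
      obtain ⟨⟨v2, hv2, ha2⟩, -⟩ := (mem_nbhd_iff G).1 hw2
      have hwU : w ∈ U := hmemU w (Finset.mem_union_right _ (hmono S1 hS1sub hw1))
      have hr1 : reach v1 := (Finset.mem_filter.1 hv1).2
      have hrw : reach w := hstep v1 w hr1 ha1 hwU
      have hv2U : v2 ∈ U := hmemU v2 (Finset.mem_union_left _ (hS2sub hv2))
      have hr2 : reach v2 := hstep w v2 hrw ha2.symm hv2U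
      rw [hS2, Finset.mem_sdiff] at hv2
      exact hv2.2 (Finset.mem_filter.2 ⟨hv2.1, hr2⟩)
    have hsum : (nbhd G S1).card + (nbhd G S2).card ≤ (nbhd G S).card := by
      rw [← Finset.card_union_of_disjoint hdisjN]
      exact Finset.card_le_card
        (Finset.union_subset (hmono _ hS1sub) (hmono _ hS2sub))
    have hcards : S2.card = S.card - S1.card := by
      rw [hS2, Finset.card_sdiff_of_subset hS1sub]
    have hle : S1.card ≤ S.card := Finset.card_le_card hS1sub
    omega
  have hreachAll : ∀ u, u ∈ U → reach u := by
    intro u hu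
    simp only [hU, Finset.coe_union, Set.mem_union, Finset.mem_coe] at hu
    rcases hu with h | h
    · exact hall u h
    · obtain ⟨⟨v, hv, hadj⟩, -⟩ := (mem_nbhd_iff G).1 h
      exact hstep v u (hall v hv) hadj (hmemU u (Finset.mem_union_right _ h))
  have hconn : (G.induce U).Connected := by
    rw [SimpleGraph.connected_iff]
    refine ⟨fun a b => ?_, ⟨⟨s₀, hs₀U⟩⟩⟩
    obtain ⟨ha, ra⟩ := hreachAll a.1 a.2
    obtain ⟨hb, rb⟩ := hreachAll b.1 b.2
    have ea : (⟨a.1, ha⟩ : U) = a := rfl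
    have eb : (⟨b.1, hb⟩ : U) = b := rfl
    exact (ea ▸ ra).symm.trans (eb ▸ rb)
  refine ⟨hconn, hcard, hSind, hNind, ?_⟩
  -- uniqueness of maximum independent sets
  intro T hT hTind hTcard
  set A : Finset V := T ∩ S with hA
  set B : Finset V := T ∩ nbhd G S with hB
  have hTAB : T = A ∪ B := by
    ext x
    simp only [hA, hB, Finset.mem_union, Finset.mem_inter]
    constructor
    · intro hx
      rcases Finset.mem_union.1 (hT hx) with h | h
      exacts [Or.inl ⟨hx, h⟩, Or.inr ⟨hx, h⟩]
    · rintro (⟨h, -⟩ | ⟨h, -⟩) <;> exact h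
  have hABdisj : Disjoint A B := by
    rw [Finset.disjoint_left]
    intro x hx1 hx2
    exact ((mem_nbhd_iff G).1 (Finset.mem_inter.1 hx2).2).2 (Finset.mem_inter.1 hx1).2
  by_cases hAe : A = ∅
  · right
    have hTN : T ⊆ nbhd G S := by
      rw [hTAB, hAe, Finset.empty_union]
      exact Finset.inter_subset_right
    exact (Finset.eq_of_subset_of_card_le hTN (hcard ▸ hTcard)).symm ▸ rfl
  by_cases hAS : A = S
  · left
    have hST : S ⊆ T := fun x hx => (Finset.mem_inter.1 (hAS ▸ hx : x ∈ A)).1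
    have hBe : B = ∅ := by
      rw [Finset.eq_empty_iff_forall_notMem]
      intro w hw
      obtain ⟨hwT, hwN⟩ := Finset.mem_inter.1 hw
      obtain ⟨⟨v, hv, hadj⟩, -⟩ := (mem_nbhd_iff G).1 hwN
      exact hTind v (hST hv) w hwT hadj
    rw [hTAB, hBe, Finset.union_empty, hAS]
  · exfalso
    have hAsub : A ⊆ S := Finset.inter_subset_right
    have hAne : A.Nonempty := Finset.nonempty_iff_ne_empty.2 hAe
    have hlt : A.card < (nbhd G A).card := not_le.1 (hmin A hAsub hAne hAS)
    have hBsub : B ⊆ nbhd G S \ nbhd G A := by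
      intro w hw
      obtain ⟨hwT, hwN⟩ := Finset.mem_inter.1 hw
      rw [Finset.mem_sdiff]
      refine ⟨hwN, fun hwA => ?_⟩
      obtain ⟨⟨v, hv, hadj⟩, -⟩ := (mem_nbhd_iff G).1 hwA
      exact hTind v (Finset.mem_inter.1 hv).1 w hwT hadj
    have hNA : nbhd G A ⊆ nbhd G S := hmono _ hAsub
    have hBcard : B.card ≤ (nbhd G S).card - (nbhd G A).card := by
      calc B.card ≤ (nbhd G S \ nbhd G A).card := Finset.card_le_card hBsub
        _ = (nbhd G S).card - (nbhd G A).card := Finset.card_sdiff_of_subset hNA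
    have hNAle : (nbhd G A).card ≤ (nbhd G S).card := Finset.card_le_card hNA
    have hTc : T.card = A.card + B.card := by
      rw [hTAB, Finset.card_union_of_disjoint hABdisj]
    omega
end
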